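/- Every sentence Θ of L(P,Q) — the sublanguage of L whose only predicate symbols are the unary predicates P and Q — that is forced at the base state v of the G-model M₁ is also forced at the base state w of the G-model M₂. -/
import Mathlib


/-- A quasi-partition: a triple `(A,B,C)` of pairwise disjoint subsets of `ℕ⁺` covering
`ℕ⁺`, with `A` and `C` infinite and `B` empty or infinite. -/
structure QP : Type where
  A : Set ℕ+
  B : Set ℕ+
  C : Set ℕ+
  cover : ∀ n : ℕ+, n ∈ A ∨ n ∈ B ∨ n ∈ C
  disjAB : ∀ n : ℕ+, n ∈ A → n ∈ B → False
  disjAC : ∀ n : ℕ+, n ∈ A → n ∈ C → False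
  disjBC : ∀ n : ℕ+, n ∈ B → n ∈ C → False
  infA : A.Infinite
  infC : C.Infinite
  infB : B = ∅ ∨ B.Infinite

/-- The quasi-order `(A,B,C) ⊑ (D,E,F) ↔ A ⊆ D ∧ F ⊆ C` on quasi-partitions. -/
def QP.sqle (x y : QP) : Prop := x.A ⊆ y.A ∧ y.C ⊆ x.C

/-- `v₁ = {3n}`, the positive multiples of 3. -/
def vA : Set ℕ+ := {n | ∃ m : ℕ, (n : ℕ) = 3 * m}
/-- `v₂ = {3n+1}`. -/
def vB : Set ℕ+ := {n | ∃ m : ℕ, (n : ℕ) = 3 * m + 1}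
/-- `v₃ = {3n+2}`. -/
def vC : Set ℕ+ := {n | ∃ m : ℕ, (n : ℕ) = 3 * m + 2}
/-- `w₁ = {2n}`, the positive even numbers. -/
def wA : Set ℕ+ := {n | ∃ m : ℕ, (n : ℕ) = 2 * m}
/-- `w₃ = {2n+1}`, the odd numbers. -/
def wC : Set ℕ+ := {n | ∃ m : ℕ, (n : ℕ) = 2 * m + 1}

lemma vB_infinite : vB.Infinite := by
  refine Set.infinite_of_injective_forall_mem
    (f := fun m : ℕ => (⟨3 * m + 1, by omega⟩ : ℕ+)) ?_ ?_
  · intro a b h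
    have h' : (3 * a + 1 : ℕ) = 3 * b + 1 := congrArg (fun x : ℕ+ => (x : ℕ)) h
    omega
  · intro m
    exact ⟨m, rfl⟩

/-- The base point `v = (v₁, v₂, v₃)` of `M₁`. -/
def vQP : QP where
  A := vA
  B := vB
  C := vC
  cover := by
    intro n
    have h : (n : ℕ) % 3 = 0 ∨ (n : ℕ) % 3 = 1 ∨ (n : ℕ) % 3 = 2 := by omega
    rcases h with h | h | h
    · exact Or.inl ⟨(n : ℕ) / 3, by omega⟩
    · exact Or.inr (Or.inl ⟨(n : ℕ) / 3, by omega⟩)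
    · exact Or.inr (Or.inr ⟨(n : ℕ) / 3, by omega⟩)
  disjAB := by rintro n ⟨a, ha⟩ ⟨b, hb⟩; omega
  disjAC := by rintro n ⟨a, ha⟩ ⟨b, hb⟩; omega
  disjBC := by rintro n ⟨a, ha⟩ ⟨b, hb⟩; omega
  infA := by
    refine Set.infinite_of_injective_forall_mem
      (f := fun m : ℕ => (⟨3 * m + 3, by omega⟩ : ℕ+)) ?_ ?_
    · intro a b h
      have h' : (3 * a + 3 : ℕ) = 3 * b + 3 := congrArg (fun x : ℕ+ => (x : ℕ)) h
      omega
    · intro m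
      refine ⟨m + 1, ?_⟩
      show (3 * m + 3 : ℕ) = 3 * (m + 1)
      ring
  infC := by
    refine Set.infinite_of_injective_forall_mem
      (f := fun m : ℕ => (⟨3 * m + 2, by omega⟩ : ℕ+)) ?_ ?_
    · intro a b h
      have h' : (3 * a + 2 : ℕ) = 3 * b + 2 := congrArg (fun x : ℕ+ => (x : ℕ)) h
      omega
    · intro m
      exact ⟨m, rfl⟩
  infB := Or.inr vB_infinite

/-- The base point `w = (w₁, ∅, w₃)` of `M₂`. -/
def wQP : QP where
  A := wA
  B := ∅
  C := wC
  cover := by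
    intro n
    have h : (n : ℕ) % 2 = 0 ∨ (n : ℕ) % 2 = 1 := by omega
    rcases h with h | h
    · exact Or.inl ⟨(n : ℕ) / 2, by omega⟩
    · exact Or.inr (Or.inr ⟨(n : ℕ) / 2, by omega⟩)
  disjAB := by rintro n - h; exact h
  disjAC := by rintro n ⟨a, ha⟩ ⟨b, hb⟩; omega
  disjBC := by rintro n h -; exact h
  infA := by
    refine Set.infinite_of_injective_forall_mem
      (f := fun m : ℕ => (⟨2 * m + 2, by omega⟩ : ℕ+)) ?_ ?_
    · intro a b h
      have h' : (2 * a + 2 : ℕ) = 2 * b + 2 := congrArg (fun x : ℕ+ => (x : ℕ)) h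
      omega
    · intro m
      refine ⟨m + 1, ?_⟩
      show (2 * m + 2 : ℕ) = 2 * (m + 1)
      ring
  infC := by
    refine Set.infinite_of_injective_forall_mem
      (f := fun m : ℕ => (⟨2 * m + 1, by omega⟩ : ℕ+)) ?_ ?_
    · intro a b h
      have h' : (2 * a + 1 : ℕ) = 2 * b + 1 := congrArg (fun x : ℕ+ => (x : ℕ)) h
      omega
    · intro m
      exact ⟨m, rfl⟩
  infB := Or.inl rfl

/-- The states of `M₁`. -/
def W1 : Type := {x : QP // vQP.sqle x ∧ (x.B ∩ vB).Infinite}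

/-- The states of `M₂`. -/
def W2 : Type := {x : QP // (wQP.sqle x ∧ x.B ≠ ∅) ∨ x = wQP}

/-- The signature with just the two unary predicates `P` and `Q`. -/
inductive PQ : Type where
  | P | Q
deriving DecidableEq

abbrev arPQ : PQ → ℕ := fun _ => 1

structure GModel (σ : Type) (ar : σ → ℕ) where
  W : Type
  le : W → W → Prop
  le_refl : ∀ w, le w w
  le_trans : ∀ u v w, le u v → le v w → le u w
  base : W
  base_le : ∀ w, le base w
  D : Type
  d_nonempty : Nonempty D
  interp : (P : σ) → W → (Fin (ar P) → D) → Prop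
  interp_mono : ∀ (P : σ) (v w), le v w → ∀ as, interp P v as → interp P w as

lemma mono_PQ (x y : QP) (h : x.sqle y) :
    (x.A ⊆ y.A) ∧ (x.A ∪ x.B ⊆ y.A ∪ y.B) := by
  refine ⟨h.1, ?_⟩
  rintro a (ha | ha)
  · exact Or.inl (h.1 ha)
  · rcases y.cover a with h1 | h1 | h1
    · exact Or.inl h1
    · exact Or.inr h1
    · exact absurd (x.disjBC a ha (h.2 h1)) not_false

/-- The G-model `M₁`. -/
def M₁ : GModel PQ arPQ where
  W := W1
  le x y := x.1.sqle y.1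
  le_refl x := ⟨subset_rfl, subset_rfl⟩
  le_trans x y z h1 h2 := ⟨h1.1.trans h2.1, h2.2.trans h1.2⟩
  base := ⟨vQP, ⟨⟨subset_rfl, subset_rfl⟩, by
    show (vQP.B ∩ vB).Infinite
    have : vQP.B ∩ vB = vB := Set.inter_self vB
    rw [this]; exact vB_infinite⟩⟩
  base_le x := x.2.1
  D := ℕ+
  d_nonempty := inferInstance
  interp p x as :=
    match p with
    | .P => as 0 ∈ x.1.A ∪ x.1.B
    | .Q => as 0 ∈ x.1.A
  interp_mono p x y hxy as h := by
    cases p with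
    | P => exact (mono_PQ x.1 y.1 hxy).2 h
    | Q => exact (mono_PQ x.1 y.1 hxy).1 h

/-- The G-model `M₂`. -/
def M₂ : GModel PQ arPQ where
  W := W2
  le x y := x.1.sqle y.1
  le_refl x := ⟨subset_rfl, subset_rfl⟩
  le_trans x y z h1 h2 := ⟨h1.1.trans h2.1, h2.2.trans h1.2⟩
  base := ⟨wQP, Or.inr rfl⟩
  base_le x := by
    rcases x.2 with h | h
    · exact h.1
    · rw [h]; exact ⟨subset_rfl, subset_rfl⟩
  D := ℕ+
  d_nonempty := inferInstance
  interp p x as :=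
    match p with
    | .P => as 0 ∈ x.1.A ∪ x.1.B
    | .Q => as 0 ∈ x.1.A
  interp_mono p x y hxy as h := by
    cases p with
    | P => exact (mono_PQ x.1 y.1 hxy).2 h
    | Q => exact (mono_PQ x.1 y.1 hxy).1 h

/-- Formulas of the first-order language over signature `(σ, ar)` with free variables
among `x₁, …, x_n`; `¬A` abbreviates `A → ⊥`.  Formulas over the signature `PQ` are
exactly the formulas of the sublanguage `L(P,Q)`. -/
inductive Formula (σ : Type) (ar : σ → ℕ) : ℕ → Type where
  | atom {n : ℕ} (P : σ) (ts : Fin (ar P) → Fin n) : Formula σ ar n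
  | falsum {n : ℕ} : Formula σ ar n
  | and {n : ℕ} (A B : Formula σ ar n) : Formula σ ar n
  | or {n : ℕ} (A B : Formula σ ar n) : Formula σ ar n
  | imp {n : ℕ} (A B : Formula σ ar n) : Formula σ ar n
  | all {n : ℕ} (A : Formula σ ar (n + 1)) : Formula σ ar n
  | ex {n : ℕ} (A : Formula σ ar (n + 1)) : Formula σ ar n

/-- The forcing relation `w ⊩ A[a₁,…,a_n]` in a G-model. -/
def GModel.force {σ : Type} {ar : σ → ℕ} (M : GModel σ ar) :
    {n : ℕ} → Formula σ ar n → M.W → (Fin n → M.D) → Prop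
  | _, .atom P ts, w, as => M.interp P w (fun i => as (ts i))
  | _, .falsum, _, _ => False
  | _, .and A B, w, as => M.force A w as ∧ M.force B w as
  | _, .or A B, w, as => M.force A w as ∨ M.force B w as
  | _, .imp A B, w, as => ∀ u, M.le w u → M.force A u as → M.force B u as
  | _, .all A, w, as => ∀ d : M.D, M.force A w (Fin.snoc as d)
  | _, .ex A, w, as => ∃ d : M.D, M.force A w (Fin.snoc as d)

/- ======================= Proof infrastructure ======================= -/

open Classical in
/-- The class (0 = A, 1 = B, 2 = C) of an element at a quasi-partition. -/
noncomputable def cls (x : QP) (d : ℕ+) : ℕ :=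
  if d ∈ x.A then 0 else if d ∈ x.B then 1 else 2

lemma cls_eq_zero {x : QP} {d : ℕ+} : cls x d = 0 ↔ d ∈ x.A := by
  unfold cls
  by_cases h : d ∈ x.A <;> simp [h]
  by_cases h' : d ∈ x.B <;> simp [h']

lemma cls_eq_one {x : QP} {d : ℕ+} : cls x d = 1 ↔ d ∈ x.B := by
  unfold cls
  by_cases h : d ∈ x.A
  · simp [h]; intro hB; exact x.disjAB d h hB
  · by_cases h' : d ∈ x.B <;> simp [h, h']

lemma cls_eq_two {x : QP} {d : ℕ+} : cls x d = 2 ↔ d ∈ x.C := by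
  unfold cls
  by_cases h : d ∈ x.A
  · simp [h]; intro hC; exact x.disjAC d h hC
  · by_cases h' : d ∈ x.B
    · simp [h, h']; intro hC; exact x.disjBC d h' hC
    · simp [h, h']
      rcases x.cover d with h1 | h1 | h1
      · exact absurd h1 h
      · exact absurd h1 h'
      · exact h1

lemma cls_cases (x : QP) (d : ℕ+) : cls x d = 0 ∨ cls x d = 1 ∨ cls x d = 2 := by
  unfold cls
  by_cases h : d ∈ x.A <;> by_cases h' : d ∈ x.B <;> simp [h, h']

lemma mem_AB_iff {x : QP} {d : ℕ+} : d ∈ x.A ∪ x.B ↔ cls x d ≠ 2 := by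
  constructor
  · rintro (h | h) h2
    · exact x.disjAC d h (cls_eq_two.mp h2)
    · exact x.disjBC d h (cls_eq_two.mp h2)
  · intro h
    rcases cls_cases x d with h1 | h1 | h1
    · exact Or.inl (cls_eq_zero.mp h1)
    · exact Or.inr (cls_eq_one.mp h1)
    · exact absurd h1 h

lemma sqle_refl (x : QP) : x.sqle x := ⟨subset_rfl, subset_rfl⟩

lemma sqle_trans {x y z : QP} (h1 : x.sqle y) (h2 : y.sqle z) : x.sqle z :=
  ⟨h1.1.trans h2.1, h2.2.trans h1.2⟩

/-- class 0 persists upward. -/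
lemma cls_mono_zero {x y : QP} (h : x.sqle y) {d : ℕ+} (hd : cls x d = 0) :
    cls y d = 0 := cls_eq_zero.mpr (h.1 (cls_eq_zero.mp hd))

/-- class 2 persists downward. -/
lemma cls_anti_two {x y : QP} (h : x.sqle y) {d : ℕ+} (hd : cls y d = 2) :
    cls x d = 2 := cls_eq_two.mpr (h.2 (cls_eq_two.mp hd))

lemma cls_w_ne_one (d : ℕ+) : cls wQP d ≠ 1 := by
  intro h
  exact (cls_eq_one.mp h : d ∈ (∅ : Set ℕ+))

lemma clsw_cases (d : ℕ+) : cls wQP d = 0 ∨ cls wQP d = 2 := by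
  rcases cls_cases wQP d with h | h | h
  · exact Or.inl h
  · exact absurd h (cls_w_ne_one d)
  · exact Or.inr h

/-- pick a fresh element of an infinite set avoiding a finite range. -/
lemma fresh {S : Set ℕ+} (hS : S.Infinite) {n : ℕ} (a : Fin n → ℕ+) :
    ∃ d, d ∈ S ∧ ∀ i, a i ≠ d := by
  obtain ⟨d, hd⟩ := (hS.diff (Set.finite_range a)).nonempty
  exact ⟨d, hd.1, fun i h => hd.2 ⟨i, h⟩⟩

lemma cls_set_inf (x : QP) (hB : x.B.Infinite) {k : ℕ} (hk : k = 0 ∨ k = 1 ∨ k = 2) :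
    {d : ℕ+ | cls x d = k}.Infinite := by
  rcases hk with rfl | rfl | rfl
  · have : {d : ℕ+ | cls x d = 0} = x.A := Set.ext fun d => cls_eq_zero
    rw [this]; exact x.infA
  · have : {d : ℕ+ | cls x d = 1} = x.B := Set.ext fun d => cls_eq_one
    rw [this]; exact hB
  · have : {d : ℕ+ | cls x d = 2} = x.C := Set.ext fun d => cls_eq_two
    rw [this]; exact x.infC

/-- The class of a pair of matched assignments. -/
def Bij {n : ℕ} (a b : Fin n → ℕ+) : Prop := ∀ i j, a i = a j ↔ b i = b j

lemma bij_snoc {n : ℕ} {a b : Fin n → ℕ+} (h : Bij a b) {d e : ℕ+}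
    (hde : ∀ i, a i = d ↔ b i = e) : Bij (Fin.snoc a d) (Fin.snoc b e) := by
  intro i j
  refine Fin.lastCases ?_ (fun i' => ?_) i
  · refine Fin.lastCases ?_ (fun j' => ?_) j
    · simp
    · simp only [Fin.snoc_last, Fin.snoc_castSucc]
      rw [eq_comm, eq_comm (a := e)]
      exact hde j'
  · refine Fin.lastCases ?_ (fun j' => ?_) j
    · simp only [Fin.snoc_last, Fin.snoc_castSucc]
      exact hde i'
    · simp only [Fin.snoc_castSucc]
      exact h i' j'

lemma tag_snoc {n : ℕ} (T : ℕ+ → ℕ+ → Prop) {a b : Fin n → ℕ+}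
    (h : ∀ i, T (a i) (b i)) {d e : ℕ+} (hde : T d e) :
    ∀ i, T ((Fin.snoc a d : Fin (n+1) → ℕ+) i) ((Fin.snoc b e : Fin (n+1) → ℕ+) i) := by
  intro i
  refine Fin.lastCases ?_ (fun i' => ?_) i
  · simpa using hde
  · simpa using h i'

/-- The generic construction of an extension with prescribed classes on finitely
many elements, starting from a state with infinite middle part. -/
lemma build (x : QP) (hBx : x.B.Infinite) {n : ℕ} (a : Fin n → ℕ+) (c : Fin n → ℕ)
    (hco : ∀ i j, a i = a j → c i = c j)
    (hc3 : ∀ i, c i = 0 ∨ c i = 1 ∨ c i = 2)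
    (hv0 : ∀ i, cls x (a i) = 0 → c i = 0)
    (hv2 : ∀ i, c i = 2 → cls x (a i) = 2) :
    ∃ x' : QP, x.sqle x' ∧ (∀ i, cls x' (a i) = c i) ∧ x'.B.Infinite ∧
      (∀ S : Set ℕ+, (x.B ∩ S).Infinite → (x'.B ∩ S).Infinite) := by
  classical
  set t : ℕ+ → ℕ := fun m => if h : ∃ i, a i = m then c h.choose else cls x m with ht
  have hta : ∀ i, t (a i) = c i := by
    intro i
    have h : ∃ j, a j = a i := ⟨i, rfl⟩
    simp only [ht, dif_pos h]
    exact hco _ _ h.choose_spec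
  have htu : ∀ m, (∀ i, a i ≠ m) → t m = cls x m := by
    intro m hm
    have : ¬ ∃ i, a i = m := fun ⟨i, hi⟩ => hm i hi
    simp only [ht, dif_neg this]
  have ht3 : ∀ m, t m = 0 ∨ t m = 1 ∨ t m = 2 := by
    intro m
    by_cases h : ∃ i, a i = m
    · simp only [ht, dif_pos h]; exact hc3 _
    · simp only [ht, dif_neg h]; exact cls_cases x m
  refine ⟨⟨{m | t m = 0}, {m | t m = 1}, {m | t m ≠ 0 ∧ t m ≠ 1}, ?_, ?_, ?_, ?_, ?_, ?_, ?_⟩,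
    ?_, ?_, ?_, ?_⟩
  · intro m
    by_cases h0 : t m = 0
    · exact Or.inl h0
    by_cases h1 : t m = 1
    · exact Or.inr (Or.inl h1)
    · exact Or.inr (Or.inr ⟨h0, h1⟩)
  · intro m h0 h1; rw [Set.mem_setOf_eq] at h0 h1; omega
  · intro m h0 h2; rw [Set.mem_setOf_eq] at h0; exact h2.1 h0
  · intro m h1 h2; rw [Set.mem_setOf_eq] at h1; exact h2.2 h1
  · -- A infinite
    refine ((x.infA.diff (Set.finite_range a)).mono ?_)
    rintro m ⟨hmA, hm⟩
    have : t m = cls x m := htu m (fun i hi => hm ⟨i, hi⟩)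
    simp only [Set.mem_setOf_eq, this]
    exact cls_eq_zero.mpr hmA
  · -- C infinite
    refine ((x.infC.diff (Set.finite_range a)).mono ?_)
    rintro m ⟨hmC, hm⟩
    have h2 : t m = cls x m := htu m (fun i hi => hm ⟨i, hi⟩)
    have : cls x m = 2 := cls_eq_two.mpr hmC
    simp only [Set.mem_setOf_eq, h2, this]
    omega
  · -- B infinite or empty
    refine Or.inr ((hBx.diff (Set.finite_range a)).mono ?_)
    rintro m ⟨hmB, hm⟩
    have : t m = cls x m := htu m (fun i hi => hm ⟨i, hi⟩)
    simp only [Set.mem_setOf_eq, this]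
    exact cls_eq_one.mpr hmB
  · -- sqle
    constructor
    · intro m hmA
      show t m = 0
      by_cases h : ∃ i, a i = m
      · obtain ⟨i, rfl⟩ := h
        rw [hta i]
        exact hv0 i (cls_eq_zero.mpr hmA)
      · rw [htu m (fun i hi => h ⟨i, hi⟩)]
        exact cls_eq_zero.mpr hmA
    · intro m hm
      obtain ⟨h0, h1⟩ := hm
      have h2 : t m = 2 := by rcases ht3 m with h | h | h <;> simp_all
      by_cases h : ∃ i, a i = m
      · obtain ⟨i, rfl⟩ := h
        rw [hta i] at h2
        exact cls_eq_two.mp (hv2 i h2)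
      · rw [htu m (fun i hi => h ⟨i, hi⟩)] at h2
        exact cls_eq_two.mp h2
  · -- classes on a
    intro i
    have h3 := hc3 i
    have := hta i
    rcases h3 with h | h | h
    · rw [h] at this ⊢
      exact cls_eq_zero.mpr this
    · rw [h] at this ⊢
      exact cls_eq_one.mpr this
    · rw [h] at this ⊢
      apply cls_eq_two.mpr
      show t _ ≠ 0 ∧ t _ ≠ 1
      omega
  · -- B infinite
    refine ((hBx.diff (Set.finite_range a)).mono ?_)
    rintro m ⟨hmB, hm⟩
    have : t m = cls x m := htu m (fun i hi => hm ⟨i, hi⟩)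
    show t m = 1
    rw [this]; exact cls_eq_one.mpr hmB
  · -- B ∩ S preserved
    intro S hS
    refine ((hS.diff (Set.finite_range a)).mono ?_)
    rintro m ⟨⟨hmB, hmS⟩, hm⟩
    have : t m = cls x m := htu m (fun i hi => hm ⟨i, hi⟩)
    exact ⟨show t m = 1 by rw [this]; exact cls_eq_one.mpr hmB, hmS⟩

lemma H4_inf : {m : ℕ+ | (m : ℕ) % 4 = 3}.Infinite := by
  refine Set.infinite_of_injective_forall_mem
    (f := fun m : ℕ => (⟨4 * m + 3, by omega⟩ : ℕ+)) ?_ ?_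
  · intro a b h
    have h' : (4 * a + 3 : ℕ) = 4 * b + 3 := congrArg (fun x : ℕ+ => (x : ℕ)) h
    omega
  · intro m
    show (4 * m + 3 : ℕ) % 4 = 3
    omega

lemma H1_inf : {m : ℕ+ | (m : ℕ) % 4 = 1}.Infinite := by
  refine Set.infinite_of_injective_forall_mem
    (f := fun m : ℕ => (⟨4 * m + 1, by omega⟩ : ℕ+)) ?_ ?_
  · intro a b h
    have h' : (4 * a + 1 : ℕ) = 4 * b + 1 := congrArg (fun x : ℕ+ => (x : ℕ)) h
    omega
  · intro m
    show (4 * m + 1 : ℕ) % 4 = 1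
    omega

/-- Construction of a proper extension of the base `w` of `M₂` with prescribed
classes on finitely many elements. -/
lemma buildW {n : ℕ} (b : Fin n → ℕ+) (c : Fin n → ℕ)
    (hco : ∀ i j, b i = b j → c i = c j)
    (hc3 : ∀ i, c i = 0 ∨ c i = 1 ∨ c i = 2)
    (hv0 : ∀ i, cls wQP (b i) = 0 → c i = 0)
    (hv2 : ∀ i, c i = 2 → cls wQP (b i) = 2) :
    ∃ y : QP, wQP.sqle y ∧ (∀ i, cls y (b i) = c i) ∧ y.B.Infinite := by
  classical
  set t : ℕ+ → ℕ := fun m =>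
    if h : ∃ i, b i = m then c h.choose
    else if (m : ℕ) % 4 = 3 then 1 else cls wQP m with ht
  have hta : ∀ i, t (b i) = c i := by
    intro i
    have h : ∃ j, b j = b i := ⟨i, rfl⟩
    simp only [ht, dif_pos h]
    exact hco _ _ h.choose_spec
  have htu : ∀ m, (∀ i, b i ≠ m) → t m = if (m : ℕ) % 4 = 3 then 1 else cls wQP m := by
    intro m hm
    have : ¬ ∃ i, b i = m := fun ⟨i, hi⟩ => hm i hi
    simp only [ht, dif_neg this]
  refine ⟨⟨{m | t m = 0}, {m | t m = 1}, {m | t m ≠ 0 ∧ t m ≠ 1}, ?_, ?_, ?_, ?_, ?_, ?_, ?_⟩,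
    ?_, ?_, ?_⟩
  · intro m
    by_cases h0 : t m = 0
    · exact Or.inl h0
    by_cases h1 : t m = 1
    · exact Or.inr (Or.inl h1)
    · exact Or.inr (Or.inr ⟨h0, h1⟩)
  · intro m h0 h1; rw [Set.mem_setOf_eq] at h0 h1; omega
  · intro m h0 h2; rw [Set.mem_setOf_eq] at h0; exact h2.1 h0
  · intro m h1 h2; rw [Set.mem_setOf_eq] at h1; exact h2.2 h1
  · -- A infinite
    refine ((wQP.infA.diff (Set.finite_range b)).mono ?_)
    rintro m ⟨hmA, hm⟩
    have h1 : t m = if (m : ℕ) % 4 = 3 then 1 else cls wQP m := htu m (fun i hi => hm ⟨i, hi⟩)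
    have h2 : (m : ℕ) % 4 ≠ 3 := by
      obtain ⟨k, hk⟩ := hmA
      omega
    have h3 : cls wQP m = 0 := cls_eq_zero.mpr hmA
    simp only [Set.mem_setOf_eq, h1, if_neg h2, h3]
  · -- C infinite
    refine ((H1_inf.diff (Set.finite_range b)).mono ?_)
    rintro m ⟨hm1, hm⟩
    have h1 : t m = if (m : ℕ) % 4 = 3 then 1 else cls wQP m := htu m (fun i hi => hm ⟨i, hi⟩)
    rw [Set.mem_setOf_eq] at hm1
    have h2 : (m : ℕ) % 4 ≠ 3 := by omega
    have h3 : cls wQP m = 2 := by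
      apply cls_eq_two.mpr
      exact ⟨(m : ℕ) / 2, by omega⟩
    simp only [Set.mem_setOf_eq, h1, if_neg h2, h3]
    omega
  · -- B infinite or empty
    refine Or.inr ((H4_inf.diff (Set.finite_range b)).mono ?_)
    rintro m ⟨hm1, hm⟩
    have h1 : t m = if (m : ℕ) % 4 = 3 then 1 else cls wQP m := htu m (fun i hi => hm ⟨i, hi⟩)
    rw [Set.mem_setOf_eq] at hm1
    simp only [Set.mem_setOf_eq, h1, if_pos hm1]
  · -- sqle
    constructor
    · intro m hmA
      show t m = 0
      by_cases h : ∃ i, b i = m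
      · obtain ⟨i, rfl⟩ := h
        rw [hta i]
        exact hv0 i (cls_eq_zero.mpr hmA)
      · rw [htu m (fun i hi => h ⟨i, hi⟩)]
        have h2 : (m : ℕ) % 4 ≠ 3 := by
          obtain ⟨k, hk⟩ := hmA
          omega
        rw [if_neg h2]
        exact cls_eq_zero.mpr hmA
    · intro m hm
      obtain ⟨h0, h1⟩ := hm
      by_cases h : ∃ i, b i = m
      · obtain ⟨i, rfl⟩ := h
        have h2 : c i = 2 := by
          have := hta i
          rcases hc3 i with hh | hh | hh <;> simp_all
        exact cls_eq_two.mp (hv2 i h2)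
      · have heq := htu m (fun i hi => h ⟨i, hi⟩)
        by_cases h4 : (m : ℕ) % 4 = 3
        · rw [if_pos h4] at heq; exact absurd heq h1
        · rw [if_neg h4] at heq
          have : cls wQP m = 2 := by
            rcases cls_cases wQP m with hh | hh | hh <;> simp_all
          exact cls_eq_two.mp this
  · -- classes on b
    intro i
    have h3 := hc3 i
    have := hta i
    rcases h3 with h | h | h
    · rw [h] at this ⊢
      exact cls_eq_zero.mpr this
    · rw [h] at this ⊢
      exact cls_eq_one.mpr this
    · rw [h] at this ⊢
      apply cls_eq_two.mpr
      show t _ ≠ 0 ∧ t _ ≠ 1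
      omega
  · -- B infinite
    refine ((H4_inf.diff (Set.finite_range b)).mono ?_)
    rintro m ⟨hm1, hm⟩
    have h1 : t m = if (m : ℕ) % 4 = 3 then 1 else cls wQP m := htu m (fun i hi => hm ⟨i, hi⟩)
    rw [Set.mem_setOf_eq] at hm1
    show t m = 1
    rw [h1, if_pos hm1]

/-- The base state of `M₂`. -/
def wW : W2 := ⟨wQP, Or.inr rfl⟩

def Tag3 (x : QP) (d e : ℕ+) : Prop := cls x d = cls wQP e ∨ (cls x d = 1 ∧ cls wQP e = 0)
def Tag4 (x : QP) (d e : ℕ+) : Prop := cls x d = cls wQP e ∨ (cls x d = 1 ∧ cls wQP e = 2)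

lemma W1_B_inf (x : W1) : x.1.B.Infinite := x.2.2.mono Set.inter_subset_left

lemma W2_ge_w (z : W2) : wQP.sqle z.1 := by
  rcases z.2 with hz | hz
  · exact hz.1
  · rw [hz]; exact sqle_refl _

lemma squeeze {y : QP} (h1 : wQP.sqle y) (h2 : y.sqle wQP) {d : ℕ+} (hd : d ∈ y.B) :
    False := by
  rcases wQP.cover d with h | h | h
  · exact y.disjAB d (h1.1 h) hd
  · exact h
  · exact y.disjBC d hd (h2.2 h)

lemma W2_above_proper {y z : W2} (hy : y.1.B.Infinite) (h : y.1.sqle z.1) :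
    z.1.B.Infinite := by
  rcases z.2 with hz | hz
  · rcases z.1.infB with he | hi
    · exact absurd he hz.2
    · exact hi
  · exfalso
    obtain ⟨d, hd⟩ := hy.nonempty
    rw [hz] at h
    exact squeeze (W2_ge_w y) h hd

lemma W2_proper_inf {z : W2} (hz : wQP.sqle z.1 ∧ z.1.B ≠ ∅) : z.1.B.Infinite := by
  rcases z.1.infB with he | hi
  · exact absurd he hz.2
  · exact hi

lemma extendW1 (x : W1) {n : ℕ} (a : Fin n → ℕ+) (c : Fin n → ℕ)
    (hco : ∀ i j, a i = a j → c i = c j)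
    (hc3 : ∀ i, c i = 0 ∨ c i = 1 ∨ c i = 2)
    (hv0 : ∀ i, cls x.1 (a i) = 0 → c i = 0)
    (hv2 : ∀ i, c i = 2 → cls x.1 (a i) = 2) :
    ∃ x' : W1, M₁.le x x' ∧ ∀ i, cls x'.1 (a i) = c i := by
  obtain ⟨x', hle, hcls, _, hBS⟩ := build x.1 (W1_B_inf x) a c hco hc3 hv0 hv2
  exact ⟨⟨x', sqle_trans x.2.1 hle, hBS vB x.2.2⟩, hle, hcls⟩

lemma extendW2 {n : ℕ} (b : Fin n → ℕ+) (c : Fin n → ℕ)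
    (hco : ∀ i j, b i = b j → c i = c j)
    (hc3 : ∀ i, c i = 0 ∨ c i = 1 ∨ c i = 2)
    (hv0 : ∀ i, cls wQP (b i) = 0 → c i = 0)
    (hv2 : ∀ i, c i = 2 → cls wQP (b i) = 2) :
    ∃ y : W2, M₂.le wW y ∧ y.1.B.Infinite ∧ ∀ i, cls y.1 (b i) = c i := by
  obtain ⟨y, hle, hcls, hB⟩ := buildW b c hco hc3 hv0 hv2
  exact ⟨⟨y, Or.inl ⟨hle, hB.nonempty.ne_empty⟩⟩, hle, hB, hcls⟩

lemma extendW2' (y : W2) (hy : y.1.B.Infinite) {n : ℕ} (b : Fin n → ℕ+) (c : Fin n → ℕ)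
    (hco : ∀ i j, b i = b j → c i = c j)
    (hc3 : ∀ i, c i = 0 ∨ c i = 1 ∨ c i = 2)
    (hv0 : ∀ i, cls y.1 (b i) = 0 → c i = 0)
    (hv2 : ∀ i, c i = 2 → cls y.1 (b i) = 2) :
    ∃ z : W2, M₂.le y z ∧ z.1.B.Infinite ∧ ∀ i, cls z.1 (b i) = c i := by
  obtain ⟨z, hle, hcls, hB, _⟩ := build y.1 hy b c hco hc3 hv0 hv2
  exact ⟨⟨z, Or.inl ⟨sqle_trans (W2_ge_w y) hle, hB.nonempty.ne_empty⟩⟩, hle, hB, hcls⟩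

lemma fresh_iff {n : ℕ} {a b : Fin n → ℕ+} {d e : ℕ+} (hd : ∀ i, a i ≠ d)
    (he : ∀ i, b i ≠ e) : ∀ i, a i = d ↔ b i = e :=
  fun i => iff_of_false (hd i) (he i)

lemma pickL_tag (x y : QP) (hxB : x.B.Infinite) (T : ℕ+ → ℕ+ → Prop)
    (hexact : ∀ d e, cls x d = cls y e → T d e)
    {n : ℕ} {a b : Fin n → ℕ+} (hbij : Bij a b) (hm : ∀ i, T (a i) (b i)) (e : ℕ+) :
    ∃ d, Bij (Fin.snoc a d) (Fin.snoc b e) ∧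
      ∀ i, T ((Fin.snoc a d : Fin (n+1) → ℕ+) i) ((Fin.snoc b e : Fin (n+1) → ℕ+) i) := by
  by_cases h : ∃ j, b j = e
  · obtain ⟨j, hj⟩ := h
    have hde : ∀ i, a i = a j ↔ b i = e := fun i => by rw [← hj]; exact hbij i j
    exact ⟨a j, bij_snoc hbij hde, tag_snoc T hm (hj ▸ hm j)⟩
  · obtain ⟨d, hdS, hdfresh⟩ := fresh (cls_set_inf x hxB (cls_cases y e)) a
    exact ⟨d, bij_snoc hbij (fresh_iff hdfresh (fun i hi => h ⟨i, hi⟩)),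
      tag_snoc T hm (hexact d e hdS)⟩

lemma pickR_tag (x y : QP) (hyB : y.B.Infinite) (T : ℕ+ → ℕ+ → Prop)
    (hexact : ∀ d e, cls x d = cls y e → T d e)
    {n : ℕ} {a b : Fin n → ℕ+} (hbij : Bij a b) (hm : ∀ i, T (a i) (b i)) (d : ℕ+) :
    ∃ e, Bij (Fin.snoc a d) (Fin.snoc b e) ∧
      ∀ i, T ((Fin.snoc a d : Fin (n+1) → ℕ+) i) ((Fin.snoc b e : Fin (n+1) → ℕ+) i) := by
  by_cases h : ∃ j, a j = d
  · obtain ⟨j, hj⟩ := h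
    have hde : ∀ i, a i = d ↔ b i = b j := fun i => by rw [← hj]; exact hbij i j
    exact ⟨b j, bij_snoc hbij hde, tag_snoc T hm (hj ▸ hm j)⟩
  · have hset : {e : ℕ+ | cls y e = cls x d}.Infinite := by
      have : {e : ℕ+ | cls y e = cls x d} = {e : ℕ+ | cls y e = cls x d} := rfl
      exact cls_set_inf y hyB (cls_cases x d)
    obtain ⟨e, heS, hefresh⟩ := fresh hset b
    exact ⟨e, bij_snoc hbij (fresh_iff (fun i hi => h ⟨i, hi⟩) hefresh),
      tag_snoc T hm (hexact d e heS.symm)⟩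

lemma pickRW (x : QP) (T : ℕ+ → ℕ+ → Prop)
    (hexact : ∀ d e, cls x d = cls wQP e → T d e) (k₀ : ℕ) (hk₀ : k₀ = 0 ∨ k₀ = 2)
    (hone : ∀ d e, cls x d = 1 → cls wQP e = k₀ → T d e)
    {n : ℕ} {a b : Fin n → ℕ+} (hbij : Bij a b) (hm : ∀ i, T (a i) (b i)) (d : ℕ+) :
    ∃ e, Bij (Fin.snoc a d) (Fin.snoc b e) ∧
      ∀ i, T ((Fin.snoc a d : Fin (n+1) → ℕ+) i) ((Fin.snoc b e : Fin (n+1) → ℕ+) i) := by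
  by_cases h : ∃ j, a j = d
  · obtain ⟨j, hj⟩ := h
    have hde : ∀ i, a i = d ↔ b i = b j := fun i => by rw [← hj]; exact hbij i j
    exact ⟨b j, bij_snoc hbij hde, tag_snoc T hm (hj ▸ hm j)⟩
  · by_cases h1 : cls x d = 1
    · have hset : {e : ℕ+ | cls wQP e = k₀}.Infinite := by
        rcases hk₀ with rfl | rfl
        · have : {e : ℕ+ | cls wQP e = 0} = wA := Set.ext fun e => cls_eq_zero
          rw [this]; exact wQP.infA
        · have : {e : ℕ+ | cls wQP e = 2} = wC := Set.ext fun e => cls_eq_two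
          rw [this]; exact wQP.infC
      obtain ⟨e, heS, hefresh⟩ := fresh hset b
      exact ⟨e, bij_snoc hbij (fresh_iff (fun i hi => h ⟨i, hi⟩) hefresh),
        tag_snoc T hm (hone d e h1 heS)⟩
    · have hset : {e : ℕ+ | cls wQP e = cls x d}.Infinite := by
        rcases cls_cases x d with hc | hc | hc
        · rw [hc]
          have : {e : ℕ+ | cls wQP e = 0} = wA := Set.ext fun e => cls_eq_zero
          rw [this]; exact wQP.infA
        · exact absurd hc h1
        · rw [hc]
          have : {e : ℕ+ | cls wQP e = 2} = wC := Set.ext fun e => cls_eq_two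
          rw [this]; exact wQP.infC
      obtain ⟨e, heS, hefresh⟩ := fresh hset b
      exact ⟨e, bij_snoc hbij (fresh_iff (fun i hi => h ⟨i, hi⟩) hefresh),
        tag_snoc T hm (hexact d e heS.symm)⟩

lemma force_atomP1 {n : ℕ} (ts : Fin (arPQ .P) → Fin n) (x : W1) (a : Fin n → ℕ+) :
    M₁.force (.atom .P ts) x a ↔ cls x.1 (a (ts 0)) ≠ 2 := by
  show a (ts 0) ∈ x.1.A ∪ x.1.B ↔ _
  exact mem_AB_iff

lemma force_atomQ1 {n : ℕ} (ts : Fin (arPQ .Q) → Fin n) (x : W1) (a : Fin n → ℕ+) :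
    M₁.force (.atom .Q ts) x a ↔ cls x.1 (a (ts 0)) = 0 := by
  show a (ts 0) ∈ x.1.A ↔ _
  exact cls_eq_zero.symm

lemma force_atomP2 {n : ℕ} (ts : Fin (arPQ .P) → Fin n) (y : W2) (b : Fin n → ℕ+) :
    M₂.force (.atom .P ts) y b ↔ cls y.1 (b (ts 0)) ≠ 2 := by
  show b (ts 0) ∈ y.1.A ∪ y.1.B ↔ _
  exact mem_AB_iff

lemma force_atomQ2 {n : ℕ} (ts : Fin (arPQ .Q) → Fin n) (y : W2) (b : Fin n → ℕ+) :
    M₂.force (.atom .Q ts) y b ↔ cls y.1 (b (ts 0)) = 0 := by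
  show b (ts 0) ∈ y.1.A ↔ _
  exact cls_eq_zero.symm

lemma force_atomP2w {n : ℕ} (ts : Fin (arPQ .P) → Fin n) (b : Fin n → ℕ+) :
    M₂.force (.atom .P ts) wW b ↔ cls wQP (b (ts 0)) ≠ 2 := by
  show b (ts 0) ∈ wQP.A ∪ wQP.B ↔ _
  exact mem_AB_iff

lemma force_atomQ2w {n : ℕ} (ts : Fin (arPQ .Q) → Fin n) (b : Fin n → ℕ+) :
    M₂.force (.atom .Q ts) wW b ↔ cls wQP (b (ts 0)) = 0 := by
  show b (ts 0) ∈ wQP.A ↔ _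
  exact cls_eq_zero.symm

lemma W2_cases (z : W2) : (wQP.sqle z.1 ∧ z.1.B ≠ ∅) ∨ z.1 = wQP := z.2

theorem main : ∀ {n : ℕ} (Θ : Formula PQ arPQ n),
    (∀ (x : W1) (y : W2), y.1.B.Infinite → ∀ a b : Fin n → ℕ+, Bij a b →
      (∀ i, cls x.1 (a i) = cls y.1 (b i)) → (M₁.force Θ x a ↔ M₂.force Θ y b)) ∧
    (∀ (x : W1) (a b : Fin n → ℕ+), Bij a b →
      (∀ i, cls x.1 (a i) = cls wQP (b i)) → (M₁.force Θ x a ↔ M₂.force Θ wW b)) ∧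
    (∀ (x : W1) (a b : Fin n → ℕ+), Bij a b →
      (∀ i, Tag3 x.1 (a i) (b i)) → M₁.force Θ x a → M₂.force Θ wW b) ∧
    (∀ (x : W1) (a b : Fin n → ℕ+), Bij a b →
      (∀ i, Tag4 x.1 (a i) (b i)) → M₂.force Θ wW b → M₁.force Θ x a) := by
  intro n Θ
  induction Θ with
  | @atom n p ts =>
    refine ⟨?_, ?_, ?_, ?_⟩
    · intro x y _ a b _ hm
      have h := hm (ts 0)
      cases p
      · rw [force_atomP1, force_atomP2]; omega
      · rw [force_atomQ1, force_atomQ2]; omega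
    · intro x a b _ hm
      have h := hm (ts 0)
      cases p
      · rw [force_atomP1, force_atomP2w]; omega
      · rw [force_atomQ1, force_atomQ2w]; omega
    · intro x a b _ hm
      have h := hm (ts 0)
      cases p
      · rw [force_atomP1, force_atomP2w]
        rcases h with h | ⟨h1, h2⟩ <;> omega
      · rw [force_atomQ1, force_atomQ2w]
        rcases h with h | ⟨h1, h2⟩ <;> omega
    · intro x a b _ hm
      have h := hm (ts 0)
      cases p
      · rw [force_atomP1, force_atomP2w]
        rcases h with h | ⟨h1, h2⟩ <;> omega
      · rw [force_atomQ1, force_atomQ2w]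
        rcases h with h | ⟨h1, h2⟩ <;> omega
  | falsum =>
    refine ⟨?_, ?_, ?_, ?_⟩
    · intro x y _ a b _ _; exact Iff.rfl
    · intro x a b _ _; exact Iff.rfl
    · intro x a b _ _ h; exact h.elim
    · intro x a b _ _ h; exact h.elim
  | @and n A B ihA ihB =>
    refine ⟨?_, ?_, ?_, ?_⟩
    · intro x y hy a b hbij hm
      exact and_congr (ihA.1 x y hy a b hbij hm) (ihB.1 x y hy a b hbij hm)
    · intro x a b hbij hm
      exact and_congr (ihA.2.1 x a b hbij hm) (ihB.2.1 x a b hbij hm)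
    · intro x a b hbij hm h
      exact ⟨ihA.2.2.1 x a b hbij hm h.1, ihB.2.2.1 x a b hbij hm h.2⟩
    · intro x a b hbij hm h
      exact ⟨ihA.2.2.2 x a b hbij hm h.1, ihB.2.2.2 x a b hbij hm h.2⟩
  | @or n A B ihA ihB =>
    refine ⟨?_, ?_, ?_, ?_⟩
    · intro x y hy a b hbij hm
      exact or_congr (ihA.1 x y hy a b hbij hm) (ihB.1 x y hy a b hbij hm)
    · intro x a b hbij hm
      exact or_congr (ihA.2.1 x a b hbij hm) (ihB.2.1 x a b hbij hm)
    · intro x a b hbij hm h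
      rcases h with h | h
      · exact Or.inl (ihA.2.2.1 x a b hbij hm h)
      · exact Or.inr (ihB.2.2.1 x a b hbij hm h)
    · intro x a b hbij hm h
      rcases h with h | h
      · exact Or.inl (ihA.2.2.2 x a b hbij hm h)
      · exact Or.inr (ihB.2.2.2 x a b hbij hm h)
  | @imp n A B ihA ihB =>
    refine ⟨?_, ?_, ?_, ?_⟩
    · -- S1
      intro x y hy a b hbij hm
      constructor
      · intro hf z hz hAz
        have hzB : z.1.B.Infinite := W2_above_proper hy hz
        obtain ⟨x', hle, hcls⟩ := extendW1 x a (fun i => cls z.1 (b i))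
          (fun i j hij => congrArg (cls z.1) ((hbij i j).mp hij))
          (fun i => cls_cases _ _)
          (fun i h0 => cls_mono_zero hz ((hm i).symm.trans h0))
          (fun i h2 => (hm i).trans (cls_anti_two hz h2))
        have hxA : M₁.force A x' a := (ihA.1 x' z hzB a b hbij hcls).mpr hAz
        exact (ihB.1 x' z hzB a b hbij hcls).mp (hf x' hle hxA)
      · intro hf z hz hAz
        obtain ⟨y', hle', hy'B, hcls⟩ := extendW2' y hy b (fun i => cls z.1 (a i))
          (fun i j hij => congrArg (cls z.1) ((hbij i j).mpr hij))
          (fun i => cls_cases _ _)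
          (fun i h0 => cls_mono_zero hz ((hm i).trans h0))
          (fun i h2 => (hm i).symm.trans (cls_anti_two hz h2))
        have hyA : M₂.force A y' b := (ihA.1 z y' hy'B a b hbij (fun i => (hcls i).symm)).mp hAz
        exact (ihB.1 z y' hy'B a b hbij (fun i => (hcls i).symm)).mpr (hf y' hle' hyA)
    · -- S2
      intro x a b hbij hm
      constructor
      · intro hf z hz hAz
        rcases W2_cases z with hp | hp
        · have hzB : z.1.B.Infinite := W2_proper_inf hp
          obtain ⟨x', hle, hcls⟩ := extendW1 x a (fun i => cls z.1 (b i))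
            (fun i j hij => congrArg (cls z.1) ((hbij i j).mp hij))
            (fun i => cls_cases _ _)
            (fun i h0 => cls_mono_zero hp.1 ((hm i).symm.trans h0))
            (fun i h2 => (hm i).trans (cls_anti_two hp.1 h2))
          have hxA : M₁.force A x' a := (ihA.1 x' z hzB a b hbij hcls).mpr hAz
          exact (ihB.1 x' z hzB a b hbij hcls).mp (hf x' hle hxA)
        · have hz' : z = wW := Subtype.ext hp
          subst hz'
          have hA' : M₁.force A x a := (ihA.2.1 x a b hbij hm).mpr hAz
          exact (ihB.2.1 x a b hbij hm).mp (hf x (sqle_refl x.1) hA')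
      · intro hf z hz hAz
        obtain ⟨y', hle', hy'B, hcls⟩ := extendW2 b (fun i => cls z.1 (a i))
          (fun i j hij => congrArg (cls z.1) ((hbij i j).mpr hij))
          (fun i => cls_cases _ _)
          (fun i h0 => cls_mono_zero hz ((hm i).trans h0))
          (fun i h2 => (hm i).symm.trans (cls_anti_two hz h2))
        have hyA : M₂.force A y' b := (ihA.1 z y' hy'B a b hbij (fun i => (hcls i).symm)).mp hAz
        exact (ihB.1 z y' hy'B a b hbij (fun i => (hcls i).symm)).mpr (hf y' hle' hyA)
    · -- S3
      intro x a b hbij hm hf z hz hAz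
      rcases W2_cases z with hp | hp
      · have hzB : z.1.B.Infinite := W2_proper_inf hp
        obtain ⟨x', hle, hcls⟩ := extendW1 x a (fun i => cls z.1 (b i))
          (fun i j hij => congrArg (cls z.1) ((hbij i j).mp hij))
          (fun i => cls_cases _ _)
          (fun i h0 => by
            show cls z.1 (b i) = 0
            rcases hm i with heq | ⟨h1, _⟩
            · exact cls_mono_zero hp.1 (heq.symm.trans h0)
            · omega)
          (fun i h2 => by
            have h2' : cls z.1 (b i) = 2 := h2
            have hw2 : cls wQP (b i) = 2 := cls_anti_two hp.1 h2'
            rcases hm i with heq | ⟨h1, h0⟩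
            · exact heq.trans hw2
            · omega)
        have hxA : M₁.force A x' a := (ihA.1 x' z hzB a b hbij hcls).mpr hAz
        exact (ihB.1 x' z hzB a b hbij hcls).mp (hf x' hle hxA)
      · have hz' : z = wW := Subtype.ext hp
        subst hz'
        obtain ⟨x', hle, hcls⟩ := extendW1 x a
          (fun i => if cls x.1 (a i) = 1 then 0 else cls x.1 (a i))
          (fun i j hij => by show (if cls x.1 (a i) = 1 then 0 else cls x.1 (a i)) = _; rw [hij])
          (fun i => by
            show (if cls x.1 (a i) = 1 then 0 else cls x.1 (a i)) = 0 ∨ _ = 1 ∨ _ = 2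
            rcases cls_cases x.1 (a i) with h | h | h <;> simp [h])
          (fun i h0 => by
            show (if cls x.1 (a i) = 1 then 0 else cls x.1 (a i)) = 0
            simp [h0])
          (fun i h2 => by
            have h2' : (if cls x.1 (a i) = 1 then 0 else cls x.1 (a i)) = 2 := h2
            by_cases h : cls x.1 (a i) = 1
            · rw [if_pos h] at h2'; omega
            · rwa [if_neg h] at h2')
        have hm' : ∀ i, cls x'.1 (a i) = cls wQP (b i) := by
          intro i
          rw [hcls i]
          show (if cls x.1 (a i) = 1 then 0 else cls x.1 (a i)) = cls wQP (b i)
          rcases hm i with heq | ⟨h1, h0⟩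
          · have hne : cls x.1 (a i) ≠ 1 := by
              rw [heq]; exact cls_w_ne_one _
            rw [if_neg hne]; exact heq
          · rw [if_pos h1, h0]
        have hA' : M₁.force A x' a := (ihA.2.1 x' a b hbij hm').mpr hAz
        exact (ihB.2.1 x' a b hbij hm').mp (hf x' hle hA')
    · -- S4
      intro x a b hbij hm hf z hz hAz
      obtain ⟨y', hle', hy'B, hcls⟩ := extendW2 b (fun i => cls z.1 (a i))
        (fun i j hij => congrArg (cls z.1) ((hbij i j).mpr hij))
        (fun i => cls_cases _ _)
        (fun i h0 => by
          show cls z.1 (a i) = 0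
          rcases hm i with heq | ⟨h1, h2⟩
          · exact cls_mono_zero hz (heq.trans h0)
          · omega)
        (fun i h2 => by
          have h2' : cls z.1 (a i) = 2 := h2
          have hx2 : cls x.1 (a i) = 2 := cls_anti_two hz h2'
          rcases hm i with heq | ⟨h1, h0⟩
          · exact heq.symm.trans hx2
          · omega)
      have hyA : M₂.force A y' b := (ihA.1 z y' hy'B a b hbij (fun i => (hcls i).symm)).mp hAz
      exact (ihB.1 z y' hy'B a b hbij (fun i => (hcls i).symm)).mpr (hf y' hle' hyA)
  | @all n A ihA =>
    refine ⟨?_, ?_, ?_, ?_⟩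
    · intro x y hy a b hbij hm
      constructor
      · intro hf e
        obtain ⟨d, hbij', hm'⟩ := pickL_tag x.1 y.1 (W1_B_inf x) _ (fun _ _ h => h) hbij hm e
        exact (ihA.1 x y hy _ _ hbij' hm').mp (hf d)
      · intro hf d
        obtain ⟨e, hbij', hm'⟩ := pickR_tag x.1 y.1 hy _ (fun _ _ h => h) hbij hm d
        exact (ihA.1 x y hy _ _ hbij' hm').mpr (hf e)
    · intro x a b hbij hm
      constructor
      · intro hf e
        obtain ⟨d, hbij', hm'⟩ := pickL_tag x.1 wQP (W1_B_inf x) _ (fun _ _ h => h) hbij hm e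
        exact (ihA.2.1 x _ _ hbij' hm').mp (hf d)
      · intro hf d
        obtain ⟨e, hbij', hm'⟩ := pickRW x.1 (Tag4 x.1) (fun _ _ h => Or.inl h) 2 (Or.inr rfl)
          (fun _ _ h1 h2 => Or.inr ⟨h1, h2⟩) hbij (fun i => Or.inl (hm i)) d
        exact ihA.2.2.2 x _ _ hbij' hm' (hf e)
    · intro x a b hbij hm hf e
      obtain ⟨d, hbij', hm'⟩ := pickL_tag x.1 wQP (W1_B_inf x) (Tag3 x.1)
        (fun _ _ h => Or.inl h) hbij hm e
      exact ihA.2.2.1 x _ _ hbij' hm' (hf d)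
    · intro x a b hbij hm hf d
      obtain ⟨e, hbij', hm'⟩ := pickRW x.1 (Tag4 x.1) (fun _ _ h => Or.inl h) 2 (Or.inr rfl)
        (fun _ _ h1 h2 => Or.inr ⟨h1, h2⟩) hbij hm d
      exact ihA.2.2.2 x _ _ hbij' hm' (hf e)
  | @ex n A ihA =>
    refine ⟨?_, ?_, ?_, ?_⟩
    · intro x y hy a b hbij hm
      constructor
      · rintro ⟨d, hd⟩
        obtain ⟨e, hbij', hm'⟩ := pickR_tag x.1 y.1 hy _ (fun _ _ h => h) hbij hm d
        exact ⟨e, (ihA.1 x y hy _ _ hbij' hm').mp hd⟩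
      · rintro ⟨e, he⟩
        obtain ⟨d, hbij', hm'⟩ := pickL_tag x.1 y.1 (W1_B_inf x) _ (fun _ _ h => h) hbij hm e
        exact ⟨d, (ihA.1 x y hy _ _ hbij' hm').mpr he⟩
    · intro x a b hbij hm
      constructor
      · rintro ⟨d, hd⟩
        obtain ⟨e, hbij', hm'⟩ := pickRW x.1 (Tag3 x.1) (fun _ _ h => Or.inl h) 0 (Or.inl rfl)
          (fun _ _ h1 h2 => Or.inr ⟨h1, h2⟩) hbij (fun i => Or.inl (hm i)) d
        exact ⟨e, ihA.2.2.1 x _ _ hbij' hm' hd⟩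
      · rintro ⟨e, he⟩
        obtain ⟨d, hbij', hm'⟩ := pickL_tag x.1 wQP (W1_B_inf x) _ (fun _ _ h => h) hbij hm e
        exact ⟨d, (ihA.2.1 x _ _ hbij' hm').mpr he⟩
    · intro x a b hbij hm hf
      obtain ⟨d, hd⟩ := hf
      obtain ⟨e, hbij', hm'⟩ := pickRW x.1 (Tag3 x.1) (fun _ _ h => Or.inl h) 0 (Or.inl rfl)
        (fun _ _ h1 h2 => Or.inr ⟨h1, h2⟩) hbij hm d
      exact ⟨e, ihA.2.2.1 x _ _ hbij' hm' hd⟩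
    · intro x a b hbij hm hf
      obtain ⟨e, he⟩ := hf
      obtain ⟨d, hbij', hm'⟩ := pickL_tag x.1 wQP (W1_B_inf x) (Tag4 x.1)
        (fun _ _ h => Or.inl h) hbij hm e
      exact ⟨d, ihA.2.2.2 x _ _ hbij' hm' he⟩


/-- Every sentence `Θ` of `L(P,Q)` forced at the base state `v` of `M₁` is also forced
at the base state `w` of `M₂`. -/
theorem base_forcing_transfers :
    ∀ Θ : Formula PQ arPQ 0,
      M₁.force Θ M₁.base (fun i => i.elim0) → M₂.force Θ M₂.base (fun i => i.elim0) := by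
  intro Θ h
  exact ((main Θ).2.1 M₁.base (fun i => i.elim0) (fun i => i.elim0)
    (fun i => i.elim0) (fun i => i.elim0)).mp h
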